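/- If ψ⁺ ≠ ψ⁻ and both are positive, then the unique minimizer u* of S(u) = ψ⁺·u + α·(ψ⁺+ψ⁻)·log(1 + exp(−u/α)) satisfies u* = α·log(ψ⁻/ψ⁺) ≠ 0, whereas the nonsmooth loss ψ⁺·max(u,0) + ψ⁻·max(−u,0) is minimized exactly at u = 0; i.e., the smooth approximation has a biased minimizer. -/

import Mathlib

/-!
With `c = ψ⁺ + ψ⁻`, the smoothed loss is `α c · log (exp (ψ⁺ u / (α c)) + exp (-ψ⁻ u / (α c)))`.
The sum of exponentials lies strictly above its tangent lines (`exp x ≥ 1 + x`, strictly for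
`x ≠ 0`), so it is strictly minimized where its derivative vanishes, which is at
`u* = α log (ψ⁻ / ψ⁺)`; this is nonzero since `ψ⁺ ≠ ψ⁻`. The nonsmooth loss is nonnegative and
vanishes only at `0`.
-/

open Real

lemma exp_mul_one_add_sub_le_exp (x y : ℝ) : exp y * (1 + (x - y)) ≤ exp x := by
  calc exp y * (1 + (x - y)) ≤ exp y * exp (x - y) := by
        gcongr; linarith [add_one_le_exp (x - y)]
    _ = exp x := by rw [← exp_add, add_sub_cancel]

lemma exp_mul_one_add_sub_lt_exp {x y : ℝ} (h : x ≠ y) : exp y * (1 + (x - y)) < exp x := by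
  calc exp y * (1 + (x - y)) < exp y * exp (x - y) := by
        gcongr; linarith [add_one_lt_exp (sub_ne_zero.2 h)]
    _ = exp x := by rw [← exp_add, add_sub_cancel]

lemma exp_mul_add_exp_neg_mul_lt_of_stationary {a b s t : ℝ} (ha : a ≠ 0) (hs : s ≠ t)
    (hst : a * exp (a * t) = b * exp (-(b * t))) :
    exp (a * t) + exp (-(b * t)) < exp (a * s) + exp (-(b * s)) := by
  have h₁ := exp_mul_one_add_sub_lt_exp (x := a * s) (y := a * t)
    (by simpa [ha] using hs)
  have h₂ := exp_mul_one_add_sub_le_exp (-(b * s)) (-(b * t))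
  linear_combination h₁ + h₂ + (t - s) * hst

noncomputable def smoothNewsvendorLoss (ψp ψm α u : ℝ) : ℝ :=
  ψp * u + α * (ψp + ψm) * log (1 + exp (-u / α))

def newsvendorLoss (ψp ψm u : ℝ) : ℝ := ψp * max u 0 + ψm * max (-u) 0

lemma newsvendorLoss_zero (ψp ψm : ℝ) : newsvendorLoss ψp ψm 0 = 0 := by
  simp [newsvendorLoss]

lemma newsvendorLoss_nonneg {ψp ψm : ℝ} (hψp : 0 ≤ ψp) (hψm : 0 ≤ ψm) (u : ℝ) :
    0 ≤ newsvendorLoss ψp ψm u := by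
  unfold newsvendorLoss; positivity

lemma newsvendorLoss_pos {ψp ψm u : ℝ} (hψp : 0 < ψp) (hψm : 0 < ψm) (hu : u ≠ 0) :
    0 < newsvendorLoss ψp ψm u := by
  unfold newsvendorLoss
  rcases hu.lt_or_gt with hu | hu
  · have : 0 < max (-u) 0 := lt_max_of_lt_left (neg_pos.2 hu)
    positivity
  · have : 0 < max u 0 := lt_max_of_lt_left hu
    positivity

lemma smoothNewsvendorLoss_eq_log_exp_add_exp {ψp ψm α : ℝ} (hc : 0 < ψp + ψm) (hα : 0 < α)
    (u : ℝ) :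
    smoothNewsvendorLoss ψp ψm α u = α * (ψp + ψm) *
      log (exp (ψp / (α * (ψp + ψm)) * u) + exp (-(ψm / (α * (ψp + ψm)) * u))) := by
  have hsum : exp (ψp / (α * (ψp + ψm)) * u) + exp (-(ψm / (α * (ψp + ψm)) * u)) =
      exp (ψp / (α * (ψp + ψm)) * u) * (1 + exp (-u / α)) := by
    rw [mul_one_add, ← exp_add]
    congr 2
    field_simp
    ring
  rw [hsum, log_mul (exp_ne_zero _) (by positivity), log_exp, smoothNewsvendorLoss]
  field_simp

lemma smoothNewsvendorLoss_lt_of_ne_argmin {ψp ψm α u : ℝ} (hψp : 0 < ψp) (hψm : 0 < ψm)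
    (hα : 0 < α) (hu : u ≠ α * log (ψm / ψp)) :
    smoothNewsvendorLoss ψp ψm α (α * log (ψm / ψp)) < smoothNewsvendorLoss ψp ψm α u := by
  have hc : 0 < ψp + ψm := by positivity
  set a := ψp / (α * (ψp + ψm))
  set b := ψm / (α * (ψp + ψm))
  set ustar := α * log (ψm / ψp)
  have hstationary : a * exp (a * ustar) = b * exp (-(b * ustar)) := by
    have hsplit : a * ustar = log (ψm / ψp) + -(b * ustar) := by
      simp only [a, b, ustar]; field_simp; ring
    rw [hsplit, exp_add, exp_log (by positivity)]
    simp only [a, b]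
    field_simp
  simp only [smoothNewsvendorLoss_eq_log_exp_add_exp hc hα]
  gcongr _ * log ?_
  exact exp_mul_add_exp_neg_mul_lt_of_stationary (by positivity) hu hstationary

theorem smooth_minimizer_biased (ψp ψm α : ℝ)
    (hψp : 0 < ψp) (hψm : 0 < ψm) (hne : ψp ≠ ψm) (hα : 0 < α) :
    α * Real.log (ψm / ψp) ≠ 0 ∧
    (∀ u : ℝ,
      (ψp * (α * Real.log (ψm / ψp)) +
          α * (ψp + ψm) * Real.log (1 + Real.exp (-(α * Real.log (ψm / ψp)) / α))) ≤
        ψp * u + α * (ψp + ψm) * Real.log (1 + Real.exp (-u / α))) ∧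
    (∀ u : ℝ, u ≠ α * Real.log (ψm / ψp) →
      (ψp * (α * Real.log (ψm / ψp)) +
          α * (ψp + ψm) * Real.log (1 + Real.exp (-(α * Real.log (ψm / ψp)) / α))) <
        ψp * u + α * (ψp + ψm) * Real.log (1 + Real.exp (-u / α))) ∧
    (∀ u : ℝ, ψp * max (0 : ℝ) 0 + ψm * max (-(0 : ℝ)) 0 ≤ ψp * max u 0 + ψm * max (-u) 0) ∧
    (∀ u : ℝ, u ≠ 0 →
      ψp * max (0 : ℝ) 0 + ψm * max (-(0 : ℝ)) 0 < ψp * max u 0 + ψm * max (-u) 0) := by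
  have hstrict (u : ℝ) (hu : u ≠ α * log (ψm / ψp)) :=
    smoothNewsvendorLoss_lt_of_ne_argmin hψp hψm hα hu
  refine ⟨mul_ne_zero hα.ne' ?_, fun u => ?_, hstrict, fun u => ?_, fun u hu => ?_⟩
  · exact log_ne_zero_of_pos_of_ne_one (by positivity)
      (by rwa [ne_eq, div_eq_one_iff_eq hψp.ne', eq_comm])
  · rcases eq_or_ne u (α * log (ψm / ψp)) with rfl | hu
    · exact le_rfl
    · exact (hstrict u hu).le
  · exact (newsvendorLoss_zero ψp ψm).trans_le (newsvendorLoss_nonneg hψp.le hψm.le u)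
  · exact (newsvendorLoss_zero ψp ψm).trans_lt (newsvendorLoss_pos hψp hψm hu)
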